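/- Let $E$ be a finite-dimensional real inner product space, let $L : E \to \mathbb{R}$ be differentiable, let $H : E \to E$ be a self-adjoint continuous linear map, and let $\lambda \in \mathbb{R}$. Let $\theta_k : E \to E$ be a differentiable map (sending an initialization $\theta_0$ to the adapted parameters $\theta_k(\theta_0)$) such that the inner-loop first-order optimality condition $\nabla L(\theta_k(\theta_0)) + \lambda\, H^2\big(\theta_k(\theta_0) - \theta_0\big) = 0$ holds for every $\theta_0 \in E$, where $H^2 = H \circ H$. Then the meta-objective $F : E \to \mathbb{R}$ defined by $F(\theta_0) = L(\theta_k(\theta_0)) + \tfrac{\lambda}{2}\big\|H\big(\theta_k(\theta_0) - \theta_0\big)\big\|^2$ is differentiable, and its gradient has the closed form $\nabla F(\theta_0) = \lambda\, H^2\big(\theta_0 - \theta_k(\theta_0)\big)$ for every $\theta_0 \in E$; in particular no second-order derivatives of $L$ appear in the meta-gradient. -/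

import Mathlib

open scoped RealInnerProductSpace
open InnerProductSpace ContinuousLinearMap

/-! Envelope theorem: `F θ₀ = L (θk θ₀) + R (θk θ₀ - θ₀)` with `R y = (λ/2) ‖H y‖²`. By the chain
rule `dF = dL ∘ Dθk + dR ∘ (Dθk - id)`, and the optimality condition `dL + dR = 0` at `θk θ₀`
cancels every term containing `Dθk`, leaving `dF = -dR`. As `∇R y = λ H* H y = λ H² y`, this gives
`∇F θ₀ = λ H² (θ₀ - θk θ₀)`. -/

theorem HasFDerivAt.envelope {𝕜 E G : Type*} [NontriviallyNormedField 𝕜]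
    [NormedAddCommGroup E] [NormedSpace 𝕜 E] [NormedAddCommGroup G] [NormedSpace 𝕜 G]
    {L R : E → G} {θk : E → E} {a b : E →L[𝕜] G} {D : E →L[𝕜] E} {θ₀ : E}
    (hL : HasFDerivAt L a (θk θ₀)) (hR : HasFDerivAt R b (θk θ₀ - θ₀))
    (hθk : HasFDerivAt θk D θ₀) (hab : a + b = 0) :
    HasFDerivAt (fun x => L (θk x) + R (θk x - x)) (-b) θ₀ := by
  have hshift : HasFDerivAt (fun x => θk x - x) (D - ContinuousLinearMap.id 𝕜 E) θ₀ :=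
    hθk.sub (hasFDerivAt_id θ₀)
  refine ((hL.comp θ₀ hθk).add (hR.comp (f := fun x => θk x - x) θ₀ hshift)).congr_fderiv ?_
  rw [eq_neg_of_add_eq_zero_left hab]
  ext v
  simp only [neg_apply, add_apply, comp_apply, sub_apply, coe_id', id_eq, map_sub]
  abel

theorem hasGradientAt_div_two_mul_norm_apply_sq {E F : Type*}
    [NormedAddCommGroup E] [InnerProductSpace ℝ E] [CompleteSpace E]
    [NormedAddCommGroup F] [InnerProductSpace ℝ F] [CompleteSpace F]
    (c : ℝ) (A : E →L[ℝ] F) (x : E) :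
    HasGradientAt (fun x => c / 2 * ‖A x‖ ^ 2) (c • adjoint A (A x)) x := by
  rw [hasGradientAt_iff_hasFDerivAt]
  refine (A.hasFDerivAt.norm_sq.const_mul (c / 2)).congr_fderiv ?_
  ext v
  simp only [smul_apply, comp_apply, coe_innerSL_apply, nsmul_eq_mul, Nat.cast_ofNat, smul_eq_mul,
    map_smul, toDual_apply_apply, adjoint_inner_left]
  ring

/-- Closed-form meta-gradient: if the differentiable adaptation map `θₖ : E → E`
satisfies the inner-loop first-order optimality condition
`∇L(θₖ(θ₀)) + λ H² (θₖ(θ₀) - θ₀) = 0` for every `θ₀`, then the meta-objective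
`F(θ₀) = L(θₖ(θ₀)) + (λ/2) ‖H (θₖ(θ₀) - θ₀)‖²` is differentiable with gradient
`∇F(θ₀) = λ H² (θ₀ - θₖ(θ₀))`. -/
theorem meta_gradient_closed_form
    {E : Type*} [NormedAddCommGroup E] [InnerProductSpace ℝ E] [FiniteDimensional ℝ E]
    (L : E → ℝ) (hL : Differentiable ℝ L)
    (H : E →L[ℝ] E) (hH : ∀ x y : E, ⟪H x, y⟫ = ⟪x, H y⟫)
    (lam : ℝ)
    (θk : E → E) (hθk : Differentiable ℝ θk)
    (hopt : ∀ θ₀ : E, gradient L (θk θ₀) + lam • H (H (θk θ₀ - θ₀)) = 0)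
    (F : E → ℝ)
    (hF : ∀ θ₀ : E, F θ₀ = L (θk θ₀) + lam / 2 * ‖H (θk θ₀ - θ₀)‖ ^ 2) :
    Differentiable ℝ F ∧ ∀ θ₀ : E, gradient F θ₀ = lam • H (H (θ₀ - θk θ₀)) := by
  have hH_adjoint : adjoint H = H := ((eq_adjoint_iff H H).2 hH).symm
  have hF_grad (θ₀ : E) : HasGradientAt F (lam • H (H (θ₀ - θk θ₀))) θ₀ := by
    have hR := hasGradientAt_div_two_mul_norm_apply_sq lam H (θk θ₀ - θ₀)
    rw [hH_adjoint] at hR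
    have henvelope := (hL (θk θ₀)).hasGradientAt.hasFDerivAt.envelope hR.hasFDerivAt
      (hθk θ₀).hasFDerivAt (by rw [← map_add, hopt, map_zero])
    rw [hasGradientAt_iff_hasFDerivAt, funext hF, ← neg_sub, map_neg, map_neg, smul_neg, map_neg]
    exact henvelope
  exact ⟨fun θ₀ => (hF_grad θ₀).differentiableAt, fun θ₀ => (hF_grad θ₀).gradient⟩
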